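/- Let f : Z → ℝ ∪ {+∞} be proper, convex and norm lower semicontinuous, and assume inf_{w ∈ Z} ( f_z(w) + h(w) ) = 0 for every z ∈ Z. Then M_f is monotone and nonempty, and d( (x,x*), M_f ) ≤ 2 √( f(x,x*) − ⟨x,x*⟩ ) for every (x,x*) ∈ X × X*, where d is the distance for the norm ‖(x,x*)‖ := (‖x‖² + ‖x*‖²)^{1/2} (the inequality is trivially true when f(x,x*) = +∞). -/

import Mathlib

open NormedSpace

noncomputable section

/-- The coupling `c(x, x*) := ⟨x, x*⟩` on `Z := X × X*`. -/
def coup (X : Type*) [NormedAddCommGroup X] [NormedSpace ℝ X]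
    (z : X × StrongDual ℝ X) : ℝ := z.2 z.1

/-- `h(x, x*) := ‖x‖²/2 + ‖x*‖²/2`. -/
def hfun (X : Type*) [NormedAddCommGroup X] [NormedSpace ℝ X]
    (z : X × StrongDual ℝ X) : ℝ := ‖z.1‖ ^ 2 / 2 + ‖z.2‖ ^ 2 / 2

/-- `M_f := {z | f z = c z}`. -/
def Mset (X : Type*) [NormedAddCommGroup X] [NormedSpace ℝ X]
    (f : X × StrongDual ℝ X → EReal) : Set (X × StrongDual ℝ X) :=
  {z | f z = ((coup X z : ℝ) : EReal)}

/-- The `ℓ²`-norm `‖(a, b)‖ := (‖a‖² + ‖b‖²)^{1/2}` on a product. -/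
def nrm2 {A B : Type*} [NormedAddCommGroup A] [NormedAddCommGroup B] (p : A × B) : ℝ :=
  Real.sqrt (‖p.1‖ ^ 2 + ‖p.2‖ ^ 2)

/-!
Write `f_z w = f (z + w) - c (z + w) + c w`, so that the hypothesis reads `f_z ≥ -h` with
`inf (f_z + h) = 0`. Hahn–Banach, separating the epigraph of `f (z + ·)` from the open strict
hypograph of the concave function `c (z + ·) - c - h`, gives an affine function `ℓ + β` between
them. As the convex conjugate of `½‖·‖²` is `½‖·‖²` for the dual norm, the functional
`a = ⌊z, ·⌋ - ℓ`, where `⌊z, w⌋ = c (z + w) - c z - c w` is `bracket z w`, satisfies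
`‖a₁‖² / 2 + ‖a₂‖² / 2 ≤ β - c z ≤ f z - c z`. For a near-minimiser `w` of `f_z + h` the
Fenchel–Young gap `h w - a w + ‖a₁‖² / 2 + ‖a₂‖² / 2` is then small, which pins
`(‖w₁‖, ‖w₂‖)` near `(‖a₁‖, ‖a₂‖)`: from a point where `f - c ≤ s²` one moves by at most
`√2 (s + δ)` to a point where `f - c ≤ δ²`. Halving `δ` at each step gives a Cauchy sequence
whose limit lies in `M_f` by lower semicontinuity, within `√2 √(f z - c z) + ε` of `z`.

Monotonicity of `M_f` is convexity at the midpoint together with `c ≤ f`, since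
`c (z - w) / 4 = (c z + c w) / 2 - c ((z + w) / 2)`.
-/

open Set Filter Topology

theorem EReal.sub_coe_le_coe_iff {x : EReal} {a t : ℝ} :
    x - a ≤ t ↔ x ≤ ((a + t : ℝ) : EReal) := by
  rw [EReal.sub_le_iff_le_add (Or.inl (EReal.coe_ne_bot _)) (Or.inl (EReal.coe_ne_top _)),
    ← EReal.coe_add, add_comm]

theorem EReal.sub_coe_add_coe_add_coe (x : EReal) (a b c : ℝ) :
    x - a + b + c = x - ((a - b - c : ℝ) : EReal) := by
  induction x with
  | bot => simp
  | top => simp only [EReal.top_sub_coe, EReal.top_add_coe]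
  | coe x => norm_cast; ring

theorem LowerSemicontinuous.sub_coe {α : Type*} [TopologicalSpace α] {F : α → EReal}
    {G : α → ℝ} (hF : LowerSemicontinuous F) (hG : Continuous G) :
    LowerSemicontinuous fun x => F x - G x := by
  have hG' : LowerSemicontinuous fun x => ((-G x : ℝ) : EReal) :=
    (continuous_coe_real_ereal.comp hG.neg).lowerSemicontinuous
  simpa [sub_eq_add_neg] using hF.add' hG' fun x =>
    EReal.continuousAt_add (Or.inr (EReal.coe_ne_bot _)) (Or.inr (EReal.coe_ne_top _))

theorem exists_affine_between {E : Type*} [TopologicalSpace E] [AddCommGroup E] [Module ℝ E]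
    [IsTopologicalAddGroup E] [ContinuousSMul ℝ E] {φ : E → EReal} {ψ : E → ℝ}
    (hφ : Convex ℝ {p : E × ℝ | φ p.1 ≤ p.2}) (hφ_ne_top : ∃ x, φ x ≠ ⊤)
    (hψ : ConcaveOn ℝ univ ψ) (hψ_cont : Continuous ψ) (hψφ : ∀ x, (ψ x : EReal) ≤ φ x) :
    ∃ (ℓ : E →L[ℝ] ℝ) (β : ℝ), (∀ x, ((ℓ x + β : ℝ) : EReal) ≤ φ x) ∧ ∀ x, ψ x ≤ ℓ x + β := by
  have hS : Convex ℝ {p : E × ℝ | p.2 < ψ p.1} := by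
    simpa using hψ.convex_strict_hypograph
  have hS_open : IsOpen {p : E × ℝ | p.2 < ψ p.1} :=
    isOpen_lt continuous_snd (hψ_cont.comp continuous_fst)
  have hST : Disjoint {p : E × ℝ | p.2 < ψ p.1} {p : E × ℝ | φ p.1 ≤ p.2} := by
    refine Set.disjoint_left.2 fun p hlt hle => ?_
    exact (lt_irrefl (φ p.1)) ((hle.trans_lt (EReal.coe_lt_coe_iff.2 hlt)).trans_le (hψφ p.1))
  obtain ⟨F, u, hFS, hFT⟩ := geometric_hahn_banach_open hS hS_open hφ hST
  set A := F.comp (ContinuousLinearMap.inl ℝ E ℝ)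
  set γ := F (0, 1)
  have hF : ∀ x t, F (x, t) = A x + t * γ := fun x t => by
    rw [show ((x, t) : E × ℝ) = (x, 0) + t • (0, 1) by simp, map_add, map_smul, smul_eq_mul]
    rfl
  have hbelow : ∀ x t, t < ψ x → A x + t * γ < u := fun x t ht => hF x t ▸ hFS (x, t) ht
  have habove : ∀ x (t : ℝ), φ x ≤ t → u ≤ A x + t * γ := fun x t ht => hF x t ▸ hFT (x, t) ht
  have hγ : 0 < γ := by
    obtain ⟨x₀, hx₀⟩ := hφ_ne_top
    have hv := (hψφ x₀).trans (EReal.le_coe_toReal hx₀)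
    have h1 := hbelow x₀ (ψ x₀ - 1) (by linarith)
    have h2 := habove x₀ _ (EReal.le_coe_toReal hx₀)
    rw [EReal.coe_le_coe_iff] at hv
    by_contra! hγ
    nlinarith
  have hℓ : ∀ x, ((-γ⁻¹) • A) x + u / γ = (u - A x) / γ := fun x => by
    simp only [FunLike.coe_smul, Pi.smul_apply, smul_eq_mul]
    ring
  refine ⟨(-γ⁻¹) • A, u / γ, fun x => ?_, fun x => ?_⟩ <;> rw [hℓ]
  · by_contra! hlt
    obtain ⟨t, hxt, htv⟩ := EReal.lt_iff_exists_real_btwn.1 hlt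
    rw [EReal.coe_lt_coe_iff, lt_div_iff₀ hγ] at htv
    linarith [habove x t hxt.le]
  · refine le_of_forall_lt fun t ht => ?_
    rw [lt_div_iff₀ hγ]
    linarith [hbelow x t ht]

theorem ContinuousLinearMap.sq_norm_div_two_le {E : Type*} [NormedAddCommGroup E]
    [NormedSpace ℝ E] (a : StrongDual ℝ E) {C : ℝ} (h : ∀ x, a x - ‖x‖ ^ 2 / 2 ≤ C) :
    ‖a‖ ^ 2 / 2 ≤ C := by
  have hC : 0 ≤ C := by simpa using h 0
  by_contra! hlt
  have hr : √(2 * C) < ‖a‖ := by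
    rw [Real.sqrt_lt (by positivity) (norm_nonneg a)]
    linarith
  obtain ⟨x₀, hx₀, hax₀⟩ := a.exists_lt_apply_of_lt_opNorm hr
  -- `x = (a x₀) • x₀` already gives `a x - ‖x‖² / 2 ≥ (a x₀)² / 2 > C`
  have h₁ := h (a x₀ • x₀)
  rw [map_smul, smul_eq_mul, norm_smul, Real.norm_eq_abs] at h₁
  rw [Real.norm_eq_abs, Real.sqrt_lt (by positivity) (abs_nonneg _)] at hax₀
  have h₂ : |a x₀| * ‖x₀‖ ≤ |a x₀| := mul_le_of_le_one_right (abs_nonneg _) hx₀.le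
  have h₃ : (|a x₀| * ‖x₀‖) ^ 2 ≤ |a x₀| ^ 2 :=
    pow_le_pow_left₀ (by positivity) h₂ 2
  rw [sq_abs] at h₃ hax₀
  nlinarith

section dual
variable {E F : Type*} [NormedAddCommGroup E] [NormedSpace ℝ E] [NormedAddCommGroup F]
  [NormedSpace ℝ F]

theorem ContinuousLinearMap.sq_norm_comp_inl_add_sq_norm_comp_inr_le (a : StrongDual ℝ (E × F))
    {C : ℝ} (h : ∀ w : E × F, a w - (‖w.1‖ ^ 2 / 2 + ‖w.2‖ ^ 2 / 2) ≤ C) :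
    ‖a.comp (inl ℝ E F)‖ ^ 2 / 2 + ‖a.comp (inr ℝ E F)‖ ^ 2 / 2 ≤ C := by
  have h₂ : ∀ y, a.comp (inr ℝ E F) y - ‖y‖ ^ 2 / 2 ≤ C - ‖a.comp (inl ℝ E F)‖ ^ 2 / 2 := by
    intro y
    have := (a.comp (inl ℝ E F)).sq_norm_div_two_le
      (C := C - (a.comp (inr ℝ E F) y - ‖y‖ ^ 2 / 2)) fun x => by
        have := h (x, y)
        rw [← a.comp_inl_add_comp_inr] at this
        linarith
    linarith
  linarith [(a.comp (inr ℝ E F)).sq_norm_div_two_le h₂]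

theorem ContinuousLinearMap.sub_norm_sq_add_sub_norm_sq_le (a : StrongDual ℝ (E × F))
    (w : E × F) :
    ((‖w.1‖ - ‖a.comp (inl ℝ E F)‖) ^ 2 + (‖w.2‖ - ‖a.comp (inr ℝ E F)‖) ^ 2) / 2 ≤
      (‖w.1‖ ^ 2 / 2 + ‖w.2‖ ^ 2 / 2) - a w +
        (‖a.comp (inl ℝ E F)‖ ^ 2 / 2 + ‖a.comp (inr ℝ E F)‖ ^ 2 / 2) := by
  have h₁ := le_of_abs_le ((a.comp (inl ℝ E F)).le_opNorm w.1)
  have h₂ := le_of_abs_le ((a.comp (inr ℝ E F)).le_opNorm w.2)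
  rw [← a.comp_inl_add_comp_inr w]
  nlinarith

end dual

theorem exists_le_zero_of_geometric_step {E : Type*} [MetricSpace E] [CompleteSpace E]
    {g : E → EReal} (hg : LowerSemicontinuous g) {C : ℝ}
    (hstep : ∀ x (δ : ℝ), 0 < δ → g x ≤ ((2 * δ) ^ 2 : ℝ) →
      ∃ y, g y ≤ (δ ^ 2 : ℝ) ∧ dist x y ≤ C * δ)
    {x : E} {ε : ℝ} (hε : 0 < ε) (hx : g x ≤ (ε ^ 2 : ℝ)) :
    ∃ m, g m ≤ 0 ∧ dist x m ≤ C * ε := by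
  choose! next hnext_le hnext_dist using hstep
  set δ : ℕ → ℝ := fun n => ε / 2 / 2 ^ n
  have hδ : ∀ n, 0 < δ n := fun n => by positivity
  let u : ℕ → E := fun n => Nat.rec x (fun n y => next y (δ n)) n
  have hu : ∀ n, g (u n) ≤ ((2 * δ n) ^ 2 : ℝ) := by
    intro n
    induction n with
    | zero => simpa [u, δ, mul_div_cancel₀] using hx
    | succ n ih =>
      convert hnext_le (u n) (δ n) (hδ n) ih using 3
      simp only [δ, pow_succ]
      ring
  have hdist : ∀ n, dist (u n) (u (n + 1)) ≤ C * ε / 2 / 2 ^ n := fun n => by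
    simpa [δ, mul_div_assoc] using hnext_dist (u n) (δ n) (hδ n) (hu n)
  obtain ⟨m, hm⟩ := cauchySeq_tendsto_of_complete (cauchySeq_of_le_geometric_two hdist)
  refine ⟨m, ?_, dist_le_of_le_geometric_two_of_tendsto₀ hdist hm⟩
  have hδ_lim : Tendsto (fun n => (2 * δ n) ^ 2) atTop (𝓝 0) := by
    have : Tendsto δ atTop (𝓝 0) := by
      simpa [δ, div_eq_mul_inv] using (tendsto_inv_atTop_zero.comp
        (tendsto_pow_atTop_atTop_of_one_lt one_lt_two)).const_mul (ε / 2)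
    simpa using (this.const_mul 2).pow 2
  refine EReal.le_of_forall_lt_iff_le.1 fun t ht => ?_
  refine (hg.isClosed_preimage (t : EReal)).mem_of_tendsto hm ?_
  filter_upwards [hδ_lim.eventually (gt_mem_nhds (EReal.coe_pos.1 ht))] with n hn
  exact (hu n).trans (EReal.coe_le_coe_iff.2 hn.le)

theorem exists_le_zero_dist_le_add {E : Type*} [MetricSpace E] [CompleteSpace E] {g : E → EReal}
    (hg : LowerSemicontinuous g) {a : ℝ} (ha : 0 < a)
    (hstep : ∀ x (s δ : ℝ), 0 ≤ s → 0 < δ → g x ≤ (s ^ 2 : ℝ) →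
      ∃ y, g y ≤ (δ ^ 2 : ℝ) ∧ dist x y ≤ a * (s + δ))
    {x : E} {s : ℝ} (hs : 0 ≤ s) (hx : g x ≤ (s ^ 2 : ℝ)) {η : ℝ} (hη : 0 < η) :
    ∃ m, g m ≤ 0 ∧ dist x m ≤ a * s + η := by
  set ε := η / (4 * a)
  have hε : 0 < ε := by positivity
  obtain ⟨y, hy, hxy⟩ := hstep x s ε hs hε hx
  obtain ⟨m, hm, hym⟩ := exists_le_zero_of_geometric_step hg (C := 3 * a)
    (fun x δ hδ hx => (hstep x (2 * δ) δ (by positivity) hδ hx).imp fun y hy =>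
      ⟨hy.1, hy.2.trans_eq (by ring)⟩) hε hy
  refine ⟨m, hm, (dist_triangle x y m).trans ?_⟩
  have : a * ε = η / 4 := by rw [mul_div_assoc', div_eq_div_iff (by positivity) four_ne_zero]; ring
  linarith

namespace WithLp

theorem prod_norm_toLp_two {A B : Type*} [NormedAddCommGroup A] [NormedAddCommGroup B]
    (p : A × B) : ‖toLp 2 p‖ = nrm2 p :=
  prod_norm_eq_of_L2 _

end WithLp

section nrm2
variable {A B : Type*} [NormedAddCommGroup A] [NormedAddCommGroup B]

theorem nrm2_add_le (p q : A × B) : nrm2 (p + q) ≤ nrm2 p + nrm2 q := by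
  simpa only [← WithLp.prod_norm_toLp_two, WithLp.toLp_add] using norm_add_le _ _

theorem nrm2_le_sqrt_two_mul {p : A × B} {s : ℝ} (hs : 0 ≤ s)
    (hp : ‖p.1‖ ^ 2 + ‖p.2‖ ^ 2 ≤ 2 * s ^ 2) : nrm2 p ≤ √2 * s := by
  calc nrm2 p ≤ √(2 * s ^ 2) := Real.sqrt_le_sqrt hp
    _ = √2 * s := by rw [Real.sqrt_mul zero_le_two, Real.sqrt_sq hs]

theorem nrm2_norm_fst_norm_snd (p : A × B) : nrm2 ((‖p.1‖, ‖p.2‖) : ℝ × ℝ) = nrm2 p := by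
  simp [nrm2]

theorem nrm2_le_sqrt_two_mul_add {p : A × B} {q₁ q₂ s δ : ℝ} (hs : 0 ≤ s) (hδ : 0 ≤ δ)
    (hq : q₁ ^ 2 + q₂ ^ 2 ≤ 2 * s ^ 2)
    (hpq : (‖p.1‖ - q₁) ^ 2 + (‖p.2‖ - q₂) ^ 2 ≤ 2 * δ ^ 2) : nrm2 p ≤ √2 * (s + δ) :=
  calc nrm2 p = nrm2 (((q₁, q₂) : ℝ × ℝ) + (‖p.1‖ - q₁, ‖p.2‖ - q₂)) := by
        rw [← nrm2_norm_fst_norm_snd, Prod.mk_add_mk, add_sub_cancel, add_sub_cancel]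
    _ ≤ √2 * s + √2 * δ := by
      refine (nrm2_add_le _ _).trans (add_le_add (nrm2_le_sqrt_two_mul hs ?_)
        (nrm2_le_sqrt_two_mul hδ ?_)) <;> simpa only [Real.norm_eq_abs, sq_abs]
    _ = √2 * (s + δ) := by ring

end nrm2

theorem convexOn_univ_sq_norm_div_two {V : Type*} [NormedAddCommGroup V] [NormedSpace ℝ V] :
    ConvexOn ℝ univ fun v : V => ‖v‖ ^ 2 / 2 := by
  simpa [div_eq_inv_mul] using
    (convexOn_univ_norm.pow (fun v _ => norm_nonneg v) 2).smul (inv_nonneg.2 zero_le_two)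

section coupling
variable {X : Type*} [NormedAddCommGroup X] [NormedSpace ℝ X]

def bracket (z : X × StrongDual ℝ X) : StrongDual ℝ (X × StrongDual ℝ X) :=
  z.2.comp (ContinuousLinearMap.fst ℝ X (StrongDual ℝ X)) +
    (ContinuousLinearMap.apply ℝ ℝ z.1).comp (ContinuousLinearMap.snd ℝ X (StrongDual ℝ X))

theorem bracket_apply (z w : X × StrongDual ℝ X) : bracket z w = z.2 w.1 + w.2 z.1 := rfl

theorem coup_add (z w : X × StrongDual ℝ X) :
    coup X (z + w) = coup X z + bracket z w + coup X w := by
  simp only [coup, bracket_apply, Prod.fst_add, Prod.snd_add, map_add, add_apply]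
  ring

theorem coup_midpoint (z w : X × StrongDual ℝ X) :
    coup X ((1 / 2 : ℝ) • z + (1 / 2 : ℝ) • w) =
      (coup X z + coup X w) / 2 - coup X (z - w) / 4 := by
  simp only [coup, Prod.fst_add, Prod.snd_add, Prod.smul_fst, Prod.smul_snd, Prod.fst_sub,
    Prod.snd_sub, map_add, map_sub, map_smul, add_apply, sub_apply, smul_apply, smul_eq_mul]
  ring

theorem continuous_coup : Continuous (coup X) :=
  continuous_snd.clm_apply continuous_fst

theorem neg_hfun_le_coup (w : X × StrongDual ℝ X) : -hfun X w ≤ coup X w := by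
  have h := neg_le_of_abs_le (w.2.le_opNorm w.1)
  unfold coup hfun
  nlinarith [sq_nonneg (‖w.1‖ - ‖w.2‖)]

theorem continuous_hfun : Continuous (hfun X) := by
  unfold hfun
  fun_prop

theorem convexOn_hfun : ConvexOn ℝ univ (hfun X) :=
  (convexOn_univ_sq_norm_div_two.comp_linearMap (LinearMap.fst ℝ X _)).add
    (convexOn_univ_sq_norm_div_two.comp_linearMap (LinearMap.snd ℝ X _))

theorem concaveOn_coup_add_bracket_sub_hfun (z : X × StrongDual ℝ X) :
    ConcaveOn ℝ univ fun w => coup X z + bracket z w - hfun X w := by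
  refine ((((bracket z).toLinearMap.concaveOn convex_univ).add convexOn_hfun.neg).add_const
    (coup X z)).congr fun w _ => ?_
  simp only [Pi.add_apply, Pi.neg_apply, ContinuousLinearMap.coe_coe]
  ring

end coupling

section shifted
variable {X : Type*} [NormedAddCommGroup X] [NormedSpace ℝ X] {f : X × StrongDual ℝ X → EReal}

def shiftFun (f : X × StrongDual ℝ X → EReal) (z w : X × StrongDual ℝ X) : EReal :=
  f (z + w) - (coup X (z + w) : ℝ) + (coup X w : ℝ)

theorem shiftFun_add_hfun (z w : X × StrongDual ℝ X) :
    shiftFun f z w + (hfun X w : ℝ) =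
      f (z + w) - ((coup X z + bracket z w - hfun X w : ℝ) : EReal) := by
  rw [shiftFun, EReal.sub_coe_add_coe_add_coe, coup_add]
  congr 2
  ring

variable {z : X × StrongDual ℝ X}

theorem le_of_iInf_shiftFun_add_hfun_eq_zero (hinf : ⨅ w, shiftFun f z w + (hfun X w : ℝ) = 0)
    (w : X × StrongDual ℝ X) :
    ((coup X z + bracket z w - hfun X w : ℝ) : EReal) ≤ f (z + w) := by
  have h := (le_iInf_iff.1 hinf.ge) w
  rwa [shiftFun_add_hfun, EReal.sub_nonneg (Or.inr (EReal.coe_ne_top _))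
    (Or.inr (EReal.coe_ne_bot _))] at h

theorem exists_lt_of_iInf_shiftFun_add_hfun_eq_zero
    (hinf : ⨅ w, shiftFun f z w + (hfun X w : ℝ) = 0) {δ : ℝ} (hδ : 0 < δ) :
    ∃ w, f (z + w) < ((coup X z + bracket z w - hfun X w + δ : ℝ) : EReal) := by
  obtain ⟨w, hw⟩ := iInf_lt_iff.1 (hinf.trans_lt (EReal.coe_pos.2 hδ))
  refine ⟨w, ?_⟩
  rwa [shiftFun_add_hfun, EReal.sub_lt_iff (Or.inl (EReal.coe_ne_bot _))
    (Or.inl (EReal.coe_ne_top _)), ← EReal.coe_add, add_comm δ] at hw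

theorem coup_le_of_iInf_shiftFun_add_hfun_eq_zero
    (hinf : ⨅ w, shiftFun f z w + (hfun X w : ℝ) = 0) : (coup X z : EReal) ≤ f z := by
  simpa [bracket_apply, hfun] using le_of_iInf_shiftFun_add_hfun_eq_zero hinf 0

open ContinuousLinearMap in
theorem exists_nrm2_le_of_le_coup_add_sq
    (hconv : Convex ℝ {p : (X × StrongDual ℝ X) × ℝ | f p.1 ≤ (p.2 : EReal)})
    (hinf : ⨅ w, shiftFun f z w + (hfun X w : ℝ) = 0) {s δ : ℝ} (hs : 0 ≤ s) (hδ : 0 < δ)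
    (hz : f z ≤ ((coup X z + s ^ 2 : ℝ) : EReal)) :
    ∃ w, f (z + w) ≤ ((coup X (z + w) + δ ^ 2 : ℝ) : EReal) ∧ nrm2 w ≤ √2 * (s + δ) := by
  have hconv_z : Convex ℝ {p : (X × StrongDual ℝ X) × ℝ | f (z + p.1) ≤ (p.2 : EReal)} := by
    simpa using hconv.translate_preimage_right ((z, 0) : (X × StrongDual ℝ X) × ℝ)
  have hf_ne_top : ∃ w, f (z + w) ≠ ⊤ :=
    ⟨0, by simpa using (hz.trans_lt (EReal.coe_lt_top _)).ne⟩
  obtain ⟨ℓ, β, hℓf, hψℓ⟩ := exists_affine_between (φ := fun w => f (z + w)) hconv_z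
    hf_ne_top (concaveOn_coup_add_bracket_sub_hfun z)
    ((continuous_const.add (bracket z).continuous).sub continuous_hfun)
    (le_of_iInf_shiftFun_add_hfun_eq_zero hinf)
  set a := bracket z - ℓ
  have hβ : β - coup X z ≤ s ^ 2 := by
    have h := EReal.coe_le_coe_iff.1 ((hℓf 0).trans (by rwa [add_zero]))
    rw [map_zero] at h
    linarith
  have ha : ‖a.comp (inl ℝ X _)‖ ^ 2 / 2 + ‖a.comp (inr ℝ X _)‖ ^ 2 / 2 ≤ β - coup X z :=
    a.sq_norm_comp_inl_add_sq_norm_comp_inr_le fun w => by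
      have := hψℓ w
      unfold hfun at this
      simp only [a, sub_apply]
      linarith
  obtain ⟨w, hw⟩ := exists_lt_of_iInf_shiftFun_add_hfun_eq_zero hinf (pow_pos hδ 2)
  have hℓw : ℓ w + β < coup X z + bracket z w - hfun X w + δ ^ 2 :=
    EReal.coe_lt_coe_iff.1 ((hℓf w).trans_lt hw)
  refine ⟨w, hw.le.trans (EReal.coe_le_coe_iff.2 ?_), ?_⟩
  · linarith [coup_add z w, neg_hfun_le_coup w]
  have hgap := a.sub_norm_sq_add_sub_norm_sq_le w
  have haw : a w = bracket z w - ℓ w := rfl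
  unfold hfun at hℓw
  exact nrm2_le_sqrt_two_mul_add (q₁ := ‖a.comp (inl ℝ X _)‖) (q₂ := ‖a.comp (inr ℝ X _)‖)
    hs hδ.le (by linarith) (by linarith)

theorem exists_le_coup_add_of_iInf_shiftFun_add_hfun_eq_zero
    (hinf : ⨅ w, shiftFun f z w + (hfun X w : ℝ) = 0) {δ : ℝ} (hδ : 0 < δ) :
    ∃ w, f (z + w) ≤ ((coup X (z + w) + δ : ℝ) : EReal) := by
  obtain ⟨w, hw⟩ := exists_lt_of_iInf_shiftFun_add_hfun_eq_zero hinf hδ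
  exact ⟨w, hw.le.trans (EReal.coe_le_coe_iff.2 (by linarith [coup_add z w, neg_hfun_le_coup w]))⟩

theorem coup_sub_nonneg_of_mem_Mset
    (hconv : Convex ℝ {p : (X × StrongDual ℝ X) × ℝ | f p.1 ≤ (p.2 : EReal)})
    (hcoup : ∀ z, (coup X z : EReal) ≤ f z) {z w : X × StrongDual ℝ X} (hz : z ∈ Mset X f)
    (hw : w ∈ Mset X f) : 0 ≤ coup X (z - w) := by
  have hmid := hconv (x := (z, coup X z)) (y := (w, coup X w)) hz.le hw.le
    (by norm_num : (0 : ℝ) ≤ 1 / 2) (by norm_num : (0 : ℝ) ≤ 1 / 2) (by norm_num)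
  have h := EReal.coe_le_coe_iff.1 ((hcoup _).trans hmid)
  simp only [Prod.smul_mk, Prod.mk_add_mk, smul_eq_mul, coup_midpoint] at h
  linarith

theorem exists_mem_Mset_nrm2_le [CompleteSpace X]
    (hconv : Convex ℝ {p : (X × StrongDual ℝ X) × ℝ | f p.1 ≤ (p.2 : EReal)})
    (hlsc : LowerSemicontinuous f) (hinf : ∀ z, ⨅ w, shiftFun f z w + (hfun X w : ℝ) = 0)
    {z : X × StrongDual ℝ X} {r : ℝ} (hz : f z ≤ ((coup X z + r : ℝ) : EReal)) {η : ℝ}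
    (hη : 0 < η) : ∃ m ∈ Mset X f, nrm2 (z - m) ≤ √2 * √r + η := by
  have hr : 0 ≤ r := by
    have := EReal.coe_le_coe_iff.1 ((coup_le_of_iInf_shiftFun_add_hfun_eq_zero (hinf z)).trans hz)
    linarith
  -- `f - c` on `Z` renormed by `nrm2`, so that `dist` is the distance of the statement
  set g : WithLp 2 (X × StrongDual ℝ X) → EReal := fun p => f p.ofLp - (coup X p.ofLp : ℝ)
  have hg : LowerSemicontinuous g :=
    (hlsc.comp (WithLp.prod_continuous_ofLp ..)).sub_coe
      (continuous_coup.comp (WithLp.prod_continuous_ofLp ..))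
  have hg_le : ∀ p (t : ℝ), g p ≤ t ↔ f p.ofLp ≤ ((coup X p.ofLp + t : ℝ) : EReal) :=
    fun _ _ => EReal.sub_coe_le_coe_iff
  have hstep : ∀ p (s δ : ℝ), 0 ≤ s → 0 < δ → g p ≤ (s ^ 2 : ℝ) →
      ∃ q, g q ≤ (δ ^ 2 : ℝ) ∧ dist p q ≤ √2 * (s + δ) := by
    intro p s δ hs hδ hp
    obtain ⟨w, hw, hnrm⟩ := exists_nrm2_le_of_le_coup_add_sq hconv (hinf _) hs hδ ((hg_le _ _).1 hp)
    refine ⟨p + WithLp.toLp 2 w, (hg_le _ _).2 hw, ?_⟩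
    rwa [dist_comm, dist_eq_norm, add_sub_cancel_left, WithLp.prod_norm_toLp_two]
  obtain ⟨m, hm, hdist⟩ := exists_le_zero_dist_le_add hg (Real.sqrt_pos.2 two_pos) hstep
    (x := WithLp.toLp 2 z) (Real.sqrt_nonneg r) ((hg_le _ _).2 (by simpa [Real.sq_sqrt hr])) hη
  refine ⟨m.ofLp, le_antisymm ?_ (coup_le_of_iInf_shiftFun_add_hfun_eq_zero (hinf _)), ?_⟩
  · simpa using (hg_le m 0).1 hm
  · rwa [dist_eq_norm, ← WithLp.toLp_ofLp (x := m), ← WithLp.toLp_sub,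
      WithLp.prod_norm_toLp_two] at hdist

end shifted

theorem stmt5_general {X : Type*} [NormedAddCommGroup X] [NormedSpace ℝ X] [CompleteSpace X]
    (f : X × StrongDual ℝ X → EReal)
    (hconv : Convex ℝ {p : (X × StrongDual ℝ X) × ℝ | f p.1 ≤ (p.2 : EReal)})
    (hlsc : LowerSemicontinuous f)
    (hinf : ∀ z : X × StrongDual ℝ X,
      (⨅ w : X × StrongDual ℝ X,
        (f (z + w) - ((coup X (z + w) : ℝ) : EReal) + ((coup X w : ℝ) : EReal)
          + ((hfun X w : ℝ) : EReal))) = 0) :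
    (∀ z ∈ Mset X f, ∀ w ∈ Mset X f, 0 ≤ (z.2 - w.2) (z.1 - w.1)) ∧
    (Mset X f).Nonempty ∧
    (∀ (z : X × StrongDual ℝ X) (r : ℝ), f z ≤ ((coup X z + r : ℝ) : EReal) →
      sInf ((fun w => nrm2 (z - w)) '' Mset X f) ≤ 2 * Real.sqrt r) := by
  have hinf' : ∀ z, ⨅ w, shiftFun f z w + (hfun X w : ℝ) = 0 := hinf
  refine ⟨fun z hz w hw => ?_, ?_, fun z r hz => ?_⟩
  · exact coup_sub_nonneg_of_mem_Mset hconv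
      (fun z => coup_le_of_iInf_shiftFun_add_hfun_eq_zero (hinf' z)) hz hw
  · obtain ⟨w, hw⟩ := exists_le_coup_add_of_iInf_shiftFun_add_hfun_eq_zero (hinf' 0) one_pos
    obtain ⟨m, hm, -⟩ := exists_mem_Mset_nrm2_le hconv hlsc hinf' hw one_pos
    exact ⟨m, hm⟩
  · have hbdd : BddBelow ((fun w => nrm2 (z - w)) '' Mset X f) :=
      ⟨0, by rintro _ ⟨w, -, rfl⟩; exact Real.sqrt_nonneg _⟩
    calc sInf ((fun w => nrm2 (z - w)) '' Mset X f) ≤ √2 * √r :=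
          le_of_forall_pos_le_add fun η hη => by
            obtain ⟨m, hm, hdist⟩ := exists_mem_Mset_nrm2_le hconv hlsc hinf' hz hη
            exact (csInf_le hbdd ⟨m, hm, rfl⟩).trans hdist
      _ ≤ 2 * √r := by gcongr; exact Real.sqrt_le_iff.2 ⟨by norm_num, by norm_num⟩

/-- if `f : Z → ℝ ∪ {+∞}` is proper, convex, norm-lsc, and
`inf_w (f_z(w) + h(w)) = 0` for every `z`, then `M_f` is monotone and nonempty,
and `d(z, M_f) ≤ 2√(f(z) - c(z))` for every `z ∈ Z` (expressed via all real upper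
bounds `r` of `f(z) - c(z)`, which also covers the trivial case `f(z) = +∞`). -/
theorem stmt5 {X : Type*} [NormedAddCommGroup X] [NormedSpace ℝ X] [CompleteSpace X]
    (f : X × StrongDual ℝ X → EReal)
    (hne_bot : ∀ z, f z ≠ ⊥) (hproper : ∃ z, f z ≠ ⊤)
    (hconv : Convex ℝ {p : (X × StrongDual ℝ X) × ℝ | f p.1 ≤ (p.2 : EReal)})
    (hlsc : LowerSemicontinuous f)
    (hinf : ∀ z : X × StrongDual ℝ X,
      (⨅ w : X × StrongDual ℝ X,
        (f (z + w) - ((coup X (z + w) : ℝ) : EReal) + ((coup X w : ℝ) : EReal)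
          + ((hfun X w : ℝ) : EReal))) = 0) :
    (∀ z ∈ Mset X f, ∀ w ∈ Mset X f, 0 ≤ (z.2 - w.2) (z.1 - w.1)) ∧
    (Mset X f).Nonempty ∧
    (∀ (z : X × StrongDual ℝ X) (r : ℝ), f z ≤ ((coup X z + r : ℝ) : EReal) →
      sInf ((fun w => nrm2 (z - w)) '' Mset X f) ≤ 2 * Real.sqrt r) :=
  stmt5_general f hconv hlsc hinf
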